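/- arXiv:2301.09484 — 9 statements merged into one kernel-verified Lean document; each statement's English description precedes it below -/
import Mathlib

section
/- (Theorem 3.1, condition (3.3b).) Let μ ∈ ℂ be such that K(μ) is invertible, the reduced matrix K̂(μ) = Wᵀ K(μ) V is invertible, and the vector (K(μ)ᵀ)⁻¹ C lies in the range of W. Then the linear transfer functions of the original and reduced systems interpolate at μ: F_L(μ) = F̂_L(μ), i.e. C K(μ)⁻¹ B = Ĉ K̂(μ)⁻¹ B̂. -/
open Matrix

/-- Theorem 3.1, condition (3.3b): interpolation of the linear transfer
function at a left interpolation point μ. -/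
theorem linear_transfer_function_left_interpolation
    (n r : ℕ) (hn : 0 < n) (hr : 0 < r)
    (K : ℂ → Matrix (Fin n) (Fin n) ℂ) (B C : Fin n → ℂ)
    (V W : Matrix (Fin n) (Fin r) ℂ) (μ : ℂ)
    (hK : IsUnit (K μ)) (hKhat : IsUnit (Wᵀ * K μ * V))
    (hW : ∃ z : Fin r → ℂ, ((K μ)ᵀ)⁻¹ *ᵥ C = W *ᵥ z) :
    C ⬝ᵥ ((K μ)⁻¹ *ᵥ B) =
      (C ᵥ* V) ⬝ᵥ ((Wᵀ * K μ * V)⁻¹ *ᵥ (Wᵀ *ᵥ B)) := by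
  obtain ⟨z, hz⟩ := hW
  have hKd : IsUnit (K μ).det := (Matrix.isUnit_iff_isUnit_det _).mp hK
  have hKhd : IsUnit (Wᵀ * K μ * V).det := (Matrix.isUnit_iff_isUnit_det _).mp hKhat
  have h1 : (K μ)ᵀ * ((K μ)ᵀ)⁻¹ = 1 :=
    Matrix.mul_nonsing_inv _ (by rw [Matrix.det_transpose]; exact hKd)
  have hC : C = (K μ)ᵀ *ᵥ (W *ᵥ z) := by
    have := congrArg ((K μ)ᵀ *ᵥ ·) hz
    simpa [Matrix.mulVec_mulVec, h1] using this
  have lhs : C ⬝ᵥ ((K μ)⁻¹ *ᵥ B) = z ⬝ᵥ (Wᵀ *ᵥ B) := by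
    rw [hC, Matrix.mulVec_transpose, ← Matrix.dotProduct_mulVec,
      Matrix.mulVec_mulVec, Matrix.mul_nonsing_inv _ hKd, Matrix.one_mulVec,
      Matrix.dotProduct_mulVec, Matrix.vecMul_transpose]
  have hCV : C ᵥ* V = (Wᵀ * K μ * V)ᵀ *ᵥ z := by
    rw [hC, ← Matrix.mulVec_transpose V, Matrix.mulVec_mulVec, Matrix.mulVec_mulVec,
      Matrix.transpose_mul, Matrix.transpose_mul, Matrix.transpose_transpose,
      Matrix.mul_assoc]
  rw [lhs, hCV]
  simp only [Matrix.mulVec_transpose]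
  rw [← Matrix.dotProduct_mulVec, Matrix.mulVec_mulVec,
    Matrix.mul_nonsing_inv _ hKhd, Matrix.one_mulVec]
end

section
/- (Theorem 3.1, condition (3.3c).) Fix an integer η ≥ 1 and σ ∈ ℂ such that K(σ) and K̂(σ) = Wᵀ K(σ) V are invertible. Assume that K(σ)⁻¹ B lies in the range of V, and that the vector K(σ)⁻¹ N_η ((K(σ)⁻¹ B)^{⊗η}) lies in the range of V. Then the η-th bilinear-type transfer functions interpolate at (σ, …, σ): F_N^{(η)}(σ, …, σ) = F̂_N^{(η)}(σ, …, σ), i.e. C K(σ)⁻¹ N_η ((K(σ)⁻¹ B)^{⊗η}) = Ĉ K̂(σ)⁻¹ N̂_η ((K̂(σ)⁻¹ B̂)^{⊗η}). -/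
open Matrix

/-- Theorem 3.1, condition (3.3c): interpolation of the η-th bilinear-type
transfer function at (σ, …, σ). -/
theorem bilinear_transfer_function_interpolation
    (n r η : ℕ) (hn : 0 < n) (hr : 0 < r) (hη : 1 ≤ η)
    (K : ℂ → Matrix (Fin n) (Fin n) ℂ) (B C : Fin n → ℂ)
    (Nη : Matrix (Fin n) (Fin η → Fin n) ℂ)
    (V W : Matrix (Fin n) (Fin r) ℂ) (σ : ℂ)
    (hK : IsUnit (K σ)) (hKhat : IsUnit (Wᵀ * K σ * V))
    (hV1 : ∃ z : Fin r → ℂ, (K σ)⁻¹ *ᵥ B = V *ᵥ z)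
    (hV2 : ∃ z : Fin r → ℂ,
      (K σ)⁻¹ *ᵥ (Nη *ᵥ fun j : Fin η → Fin n => ∏ k, ((K σ)⁻¹ *ᵥ B) (j k)) =
        V *ᵥ z) :
    C ⬝ᵥ ((K σ)⁻¹ *ᵥ (Nη *ᵥ fun j : Fin η → Fin n => ∏ k, ((K σ)⁻¹ *ᵥ B) (j k))) =
      (C ᵥ* V) ⬝ᵥ ((Wᵀ * K σ * V)⁻¹ *ᵥ
        ((Wᵀ * Nη *
            Matrix.of (fun (j : Fin η → Fin n) (j' : Fin η → Fin r) =>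
              ∏ k, V (j k) (j' k))) *ᵥ
          fun j : Fin η → Fin r =>
            ∏ k, ((Wᵀ * K σ * V)⁻¹ *ᵥ (Wᵀ *ᵥ B)) (j k))) := by
  obtain ⟨z₁, h₁⟩ := hV1
  obtain ⟨z₂, h₂⟩ := hV2
  have hKd : IsUnit (K σ).det := (Matrix.isUnit_iff_isUnit_det _).mp hK
  have hKhd : IsUnit (Wᵀ * K σ * V).det := (Matrix.isUnit_iff_isUnit_det _).mp hKhat
  -- B = K σ *ᵥ (V *ᵥ z₁)
  have hB : B = K σ *ᵥ (V *ᵥ z₁) := by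
    rw [← h₁, Matrix.mulVec_mulVec, Matrix.mul_nonsing_inv _ hKd, Matrix.one_mulVec]
  -- Step A : reduced solve gives z₁
  have hA : (Wᵀ * K σ * V)⁻¹ *ᵥ (Wᵀ *ᵥ B) = z₁ := by
    have hWB : Wᵀ *ᵥ B = (Wᵀ * K σ * V) *ᵥ z₁ := by
      rw [hB]; simp only [Matrix.mulVec_mulVec, Matrix.mul_assoc]
    rw [hWB, Matrix.mulVec_mulVec, Matrix.nonsing_inv_mul _ hKhd, Matrix.one_mulVec]
  -- Step C : Kronecker power of V maps z₁^{⊗η} to (V z₁)^{⊗η}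
  have hC : (Matrix.of (fun (j : Fin η → Fin n) (j' : Fin η → Fin r) =>
      ∏ k, V (j k) (j' k))) *ᵥ (fun j' : Fin η → Fin r => ∏ k, z₁ (j' k)) =
      fun j : Fin η → Fin n => ∏ k, (V *ᵥ z₁) (j k) := by
    funext j
    simp only [Matrix.mulVec, dotProduct, Matrix.of_apply]
    rw [Finset.prod_univ_sum, Fintype.piFinset_univ]
    refine Finset.sum_congr rfl fun j' _ => ?_
    rw [Finset.prod_mul_distrib]
  -- rewrite the inner argument of RHS
  have harg : (fun j : Fin η → Fin r => ∏ k, ((Wᵀ * K σ * V)⁻¹ *ᵥ (Wᵀ *ᵥ B)) (j k)) =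
      fun j => ∏ k, z₁ (j k) := by
    funext j; simp [hA]
  -- N x^{⊗η} = K σ *ᵥ (V *ᵥ z₂)
  have hN : (Nη *ᵥ fun j : Fin η → Fin n => ∏ k, ((K σ)⁻¹ *ᵥ B) (j k)) =
      K σ *ᵥ (V *ᵥ z₂) := by
    rw [← h₂, Matrix.mulVec_mulVec, Matrix.mul_nonsing_inv _ hKd, Matrix.one_mulVec]
  have hRHS : (Wᵀ * K σ * V)⁻¹ *ᵥ
      ((Wᵀ * Nη *
          Matrix.of (fun (j : Fin η → Fin n) (j' : Fin η → Fin r) =>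
            ∏ k, V (j k) (j' k))) *ᵥ
        fun j : Fin η → Fin r =>
          ∏ k, ((Wᵀ * K σ * V)⁻¹ *ᵥ (Wᵀ *ᵥ B)) (j k)) = z₂ := by
    have hx : (fun j : Fin η → Fin n => ∏ k, (V *ᵥ z₁) (j k)) =
        fun j => ∏ k, ((K σ)⁻¹ *ᵥ B) (j k) := by
      funext j; simp [h₁]
    rw [harg, ← Matrix.mulVec_mulVec, hC, hx, ← Matrix.mulVec_mulVec, hN]
    have hWKV : Wᵀ *ᵥ (K σ *ᵥ (V *ᵥ z₂)) = (Wᵀ * K σ * V) *ᵥ z₂ := by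
      simp only [Matrix.mulVec_mulVec, Matrix.mul_assoc]
    rw [hWKV, Matrix.mulVec_mulVec, Matrix.nonsing_inv_mul _ hKhd, Matrix.one_mulVec]
  rw [hRHS, h₂, ← Matrix.dotProduct_mulVec]
end

section
/- (Intermediate relation (3.11a) in the proof of Theorem 3.1.) Let σ ∈ ℂ be such that K(σ) is invertible, the reduced matrix K̂(σ) = Wᵀ K(σ) V is invertible, and K(σ)⁻¹ B lies in the range of V. Then V K̂(σ)⁻¹ B̂ = K(σ)⁻¹ B, i.e. the lifted reduced linear solve reproduces the full-order linear solve. -/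
open Matrix

/-- Intermediate relation (3.11a) in the proof of Theorem 3.1: the lifted
reduced linear solve reproduces the full-order linear solve. -/
theorem lifted_reduced_linear_solve
    (n r : ℕ) (hn : 0 < n) (hr : 0 < r)
    (K : ℂ → Matrix (Fin n) (Fin n) ℂ) (B : Fin n → ℂ)
    (V W : Matrix (Fin n) (Fin r) ℂ) (σ : ℂ)
    (hK : IsUnit (K σ)) (hKhat : IsUnit (Wᵀ * K σ * V))
    (hV : ∃ z : Fin r → ℂ, (K σ)⁻¹ *ᵥ B = V *ᵥ z) :
    V *ᵥ ((Wᵀ * K σ * V)⁻¹ *ᵥ (Wᵀ *ᵥ B)) = (K σ)⁻¹ *ᵥ B := by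
  obtain ⟨z, hz⟩ := hV
  have hB : B = K σ *ᵥ (V *ᵥ z) := by
    rw [← hz, mulVec_mulVec, Matrix.mul_nonsing_inv _ (isUnit_iff_isUnit_det _ |>.mp hK),
      one_mulVec]
  have hWB : Wᵀ *ᵥ B = (Wᵀ * K σ * V) *ᵥ z := by
    rw [hB, mulVec_mulVec, mulVec_mulVec, Matrix.mul_assoc]
  have hinner : (Wᵀ * K σ * V)⁻¹ *ᵥ ((Wᵀ * K σ * V) *ᵥ z) = z := by
    rw [mulVec_mulVec, Matrix.nonsing_inv_mul _ (isUnit_iff_isUnit_det _ |>.mp hKhat),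
      one_mulVec]
  rw [hWB, hinner, hz]
end

section
/- (Intermediate relation (3.11b) in the proof of Theorem 3.1.) Let μ ∈ ℂ be such that K(μ) is invertible, the reduced matrix K̂(μ) = Wᵀ K(μ) V is invertible, and (K(μ)ᵀ)⁻¹ C lies in the range of W. Then W (K̂(μ)ᵀ)⁻¹ (Vᵀ C) = (K(μ)ᵀ)⁻¹ C; equivalently, as row vectors, Ĉ K̂(μ)⁻¹ Wᵀ = C K(μ)⁻¹, where Ĉ is the row vector C V. -/
open Matrix

/-- Intermediate relation (3.11b) in the proof of Theorem 3.1: the lifted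
reduced adjoint solve reproduces the full-order adjoint solve. -/
theorem lifted_reduced_adjoint_solve
    (n r : ℕ) (hn : 0 < n) (hr : 0 < r)
    (K : ℂ → Matrix (Fin n) (Fin n) ℂ) (C : Fin n → ℂ)
    (V W : Matrix (Fin n) (Fin r) ℂ) (μ : ℂ)
    (hK : IsUnit (K μ)) (hKhat : IsUnit (Wᵀ * K μ * V))
    (hW : ∃ z : Fin r → ℂ, ((K μ)ᵀ)⁻¹ *ᵥ C = W *ᵥ z) :
    W *ᵥ (((Wᵀ * K μ * V)ᵀ)⁻¹ *ᵥ (Vᵀ *ᵥ C)) = ((K μ)ᵀ)⁻¹ *ᵥ C := by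
  obtain ⟨z, hz⟩ := hW
  have hKT : IsUnit (K μ)ᵀ := by
    rw [Matrix.isUnit_iff_isUnit_det, Matrix.det_transpose, ← Matrix.isUnit_iff_isUnit_det]
    exact hK
  have hKhatT : IsUnit (Wᵀ * K μ * V)ᵀ := by
    rw [Matrix.isUnit_iff_isUnit_det, Matrix.det_transpose, ← Matrix.isUnit_iff_isUnit_det]
    exact hKhat
  have hC : C = (K μ)ᵀ *ᵥ (W *ᵥ z) := by
    rw [← hz, mulVec_mulVec, Matrix.mul_nonsing_inv _ ((Matrix.isUnit_iff_isUnit_det _).mp hKT),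
      one_mulVec]
  have key : ((Wᵀ * K μ * V)ᵀ)⁻¹ *ᵥ (Vᵀ *ᵥ C) = z := by
    rw [hC]
    have h2 : Vᵀ *ᵥ ((K μ)ᵀ *ᵥ (W *ᵥ z)) = (Wᵀ * K μ * V)ᵀ *ᵥ z := by
      simp [mulVec_mulVec, Matrix.transpose_mul, Matrix.mul_assoc]
    rw [h2, mulVec_mulVec,
      Matrix.nonsing_inv_mul _ ((Matrix.isUnit_iff_isUnit_det _).mp hKhatT), one_mulVec]
  rw [key, hz]
end

section
/- (Intermediate relation (3.6) in the proof of Theorem 3.1.) Fix an integer η ≥ 1 and σ ∈ ℂ such that K(σ) and K̂(σ) = Wᵀ K(σ) V are invertible. Assume that K(σ)⁻¹ B lies in the range of V and that the vector K(σ)⁻¹ N_η ((K(σ)⁻¹ B)^{⊗η}) lies in the range of V. Then the lifted reduced quantity reproduces the full-order one: V K̂(σ)⁻¹ N̂_η ((K̂(σ)⁻¹ B̂)^{⊗η}) = K(σ)⁻¹ N_η ((K(σ)⁻¹ B)^{⊗η}). -/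
open Matrix

theorem kron_mulVec {n r η : ℕ} (V : Matrix (Fin n) (Fin r) ℂ) (z : Fin r → ℂ) :
    ((Matrix.of (fun (j : Fin η → Fin n) (j' : Fin η → Fin r) =>
        ∏ k, V (j k) (j' k))) *ᵥ fun j' : Fin η → Fin r => ∏ k, z (j' k)) =
      fun j : Fin η → Fin n => ∏ k, (V *ᵥ z) (j k) := by
  funext j
  simp only [mulVec, dotProduct, Matrix.of_apply]
  rw [Fintype.prod_sum]
  exact Finset.sum_congr rfl fun x _ => (Finset.prod_mul_distrib).symm

/-- Intermediate relation (3.6) in the proof of Theorem 3.1: the lifted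
reduced bilinear-type quantity reproduces the full-order one. -/
theorem lifted_reduced_bilinear_quantity
    (n r η : ℕ) (hn : 0 < n) (hr : 0 < r) (hη : 1 ≤ η)
    (K : ℂ → Matrix (Fin n) (Fin n) ℂ) (B : Fin n → ℂ)
    (Nη : Matrix (Fin n) (Fin η → Fin n) ℂ)
    (V W : Matrix (Fin n) (Fin r) ℂ) (σ : ℂ)
    (hK : IsUnit (K σ)) (hKhat : IsUnit (Wᵀ * K σ * V))
    (hV1 : ∃ z : Fin r → ℂ, (K σ)⁻¹ *ᵥ B = V *ᵥ z)
    (hV2 : ∃ z : Fin r → ℂ,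
      (K σ)⁻¹ *ᵥ (Nη *ᵥ fun j : Fin η → Fin n => ∏ k, ((K σ)⁻¹ *ᵥ B) (j k)) =
        V *ᵥ z) :
    V *ᵥ ((Wᵀ * K σ * V)⁻¹ *ᵥ
        ((Wᵀ * Nη *
            Matrix.of (fun (j : Fin η → Fin n) (j' : Fin η → Fin r) =>
              ∏ k, V (j k) (j' k))) *ᵥ
          fun j : Fin η → Fin r =>
            ∏ k, ((Wᵀ * K σ * V)⁻¹ *ᵥ (Wᵀ *ᵥ B)) (j k))) =
      (K σ)⁻¹ *ᵥ (Nη *ᵥ fun j : Fin η → Fin n => ∏ k, ((K σ)⁻¹ *ᵥ B) (j k)) := by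
  obtain ⟨z1, hz1⟩ := hV1
  obtain ⟨z2, hz2⟩ := hV2
  have hKd : IsUnit (K σ).det := (Matrix.isUnit_iff_isUnit_det _).1 hK
  have hKhd : IsUnit (Wᵀ * K σ * V).det := (Matrix.isUnit_iff_isUnit_det _).1 hKhat
  have hB : K σ *ᵥ ((K σ)⁻¹ *ᵥ B) = B := by
    rw [Matrix.mulVec_mulVec, Matrix.mul_nonsing_inv _ hKd, Matrix.one_mulVec]
  -- Step A : reduced solution equals z1
  have hA : (Wᵀ * K σ * V)⁻¹ *ᵥ (Wᵀ *ᵥ B) = z1 := by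
    have : Wᵀ *ᵥ B = (Wᵀ * K σ * V) *ᵥ z1 := by
      rw [← hB, hz1, Matrix.mulVec_mulVec, Matrix.mulVec_mulVec, Matrix.mul_assoc]
    rw [this, Matrix.mulVec_mulVec, Matrix.nonsing_inv_mul _ hKhd, Matrix.one_mulVec]
  rw [hA]
  -- Step B : Kronecker factorization
  have hB2 : ((Matrix.of (fun (j : Fin η → Fin n) (j' : Fin η → Fin r) =>
        ∏ k, V (j k) (j' k))) *ᵥ fun j' : Fin η → Fin r => ∏ k, z1 (j' k)) =
      fun j : Fin η → Fin n => ∏ k, ((K σ)⁻¹ *ᵥ B) (j k) := by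
    rw [kron_mulVec, hz1]
  rw [← Matrix.mulVec_mulVec, hB2]
  -- Step C
  have hC : Nη *ᵥ (fun j : Fin η → Fin n => ∏ k, ((K σ)⁻¹ *ᵥ B) (j k)) =
      K σ *ᵥ (V *ᵥ z2) := by
    rw [← hz2, Matrix.mulVec_mulVec, Matrix.mul_nonsing_inv _ hKd, Matrix.one_mulVec]
  rw [← Matrix.mulVec_mulVec, hC]
  have hW : Wᵀ *ᵥ (K σ *ᵥ (V *ᵥ z2)) = (Wᵀ * K σ * V) *ᵥ z2 := by
    simp [Matrix.mulVec_mulVec, Matrix.mul_assoc]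
  have h1 : (Wᵀ * K σ * V)⁻¹ *ᵥ ((Wᵀ * K σ * V) *ᵥ z2) = z2 := by
    rw [Matrix.mulVec_mulVec, Matrix.nonsing_inv_mul _ hKhd, Matrix.one_mulVec]
  have h2 : (K σ)⁻¹ *ᵥ (K σ *ᵥ (V *ᵥ z2)) = V *ᵥ z2 := by
    rw [Matrix.mulVec_mulVec, Matrix.nonsing_inv_mul _ hKd, Matrix.one_mulVec]
  rw [hW, h1, h2]
end

section
/- (Theorem 3.2, condition (3.12a): Hermite interpolation of the linear transfer function.) Let σ ∈ ℂ and suppose every entry of K, as a function ℂ → ℂ, is differentiable at each point of some neighborhood of σ. Suppose K(σ) and K̂(σ) = Wᵀ K(σ) V are invertible, K(σ)⁻¹ B lies in the range of V, and (K(σ)ᵀ)⁻¹ C lies in the range of W. Then the derivatives of the linear transfer functions match at σ: deriv (fun s => F_L(s)) σ = deriv (fun s => F̂_L(s)) σ. -/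
open Matrix

section Aux

attribute [local instance] Matrix.linftyOpNormedAddCommGroup Matrix.linftyOpNormedRing
  Matrix.linftyOpNormedAlgebra Matrix.linftyOpNormedSpace

variable {m p q : ℕ}

lemma entry_norm_le_linfty (A : Matrix (Fin m) (Fin p) ℂ) (i : Fin m) (j : Fin p) :
    ‖A i j‖ ≤ ‖A‖ := by
  have h1 : ‖A i j‖₊ ≤ ∑ j', ‖A i j'‖₊ :=
    Finset.single_le_sum (f := fun j' => ‖A i j'‖₊) (fun _ _ => zero_le) (Finset.mem_univ j)
  have h2 : (∑ j', ‖A i j'‖₊) ≤ Finset.univ.sup fun i' => ∑ j', ‖A i' j'‖₊ :=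
    Finset.le_sup (f := fun i' => ∑ j', ‖A i' j'‖₊) (Finset.mem_univ i)
  have h3 : ‖A i j‖₊ ≤ ‖A‖₊ := by
    rw [Matrix.linfty_opNNNorm_def]; exact h1.trans h2
  exact_mod_cast h3

lemma entry_hasDerivAt {f : ℂ → Matrix (Fin m) (Fin p) ℂ} {f' : Matrix (Fin m) (Fin p) ℂ}
    {σ : ℂ} (h : HasDerivAt f f' σ) (i : Fin m) (j : Fin p) :
    HasDerivAt (fun s => f s i j) (f' i j) σ := by
  rw [hasDerivAt_iff_isLittleO]
  have h := hasDerivAt_iff_isLittleO.mp h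
  have hO : (fun s => f s i j - f σ i j - (s - σ) * f' i j) =O[nhds σ]
      (fun s => f s - f σ - (s - σ) • f') := by
    refine Asymptotics.IsBigO.of_bound 1 ?_
    filter_upwards with s
    rw [one_mul]
    have := entry_norm_le_linfty (f s - f σ - (s - σ) • f') i j
    simpa [Matrix.sub_apply, Matrix.smul_apply] using this
  exact hO.trans_isLittleO h

lemma matrix_hasDerivAt {f : ℂ → Matrix (Fin m) (Fin p) ℂ} {f' : Matrix (Fin m) (Fin p) ℂ}
    {σ : ℂ} (h : ∀ i j, HasDerivAt (fun s => f s i j) (f' i j) σ) :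
    HasDerivAt f f' σ := by
  have key : HasDerivAt (fun s => ∑ i : Fin m, ∑ j : Fin p,
      Matrix.single i j (f s i j)) (∑ i : Fin m, ∑ j : Fin p,
      Matrix.single i j (f' i j)) σ := by
    refine HasDerivAt.fun_sum fun i _ => HasDerivAt.fun_sum fun j _ => ?_
    have : ∀ c : ℂ, Matrix.single i j c = c • Matrix.single i j (1 : ℂ) := by
      intro c; rw [Matrix.smul_single, smul_eq_mul, mul_one]
    rw [show (fun s => Matrix.single i j (f s i j)) =
      (fun s => f s i j • Matrix.single i j (1 : ℂ)) from funext fun s => this _,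
      this (f' i j)]
    exact (h i j).smul_const _
  have e1 : f = fun s => ∑ i : Fin m, ∑ j : Fin p, Matrix.single i j (f s i j) :=
    funext fun s => matrix_eq_sum_single (f s)
  have e2 : f' = ∑ i : Fin m, ∑ j : Fin p, Matrix.single i j (f' i j) :=
    matrix_eq_sum_single f'
  rw [e1, e2]
  exact key

lemma inv_entry_hasDerivAt (K : ℂ → Matrix (Fin m) (Fin m) ℂ)
    (K' : Matrix (Fin m) (Fin m) ℂ) (σ : ℂ)
    (hd : ∀ i j, HasDerivAt (fun t => K t i j) (K' i j) σ) (hU : IsUnit (K σ))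
    (i j : Fin m) :
    HasDerivAt (fun s => (K s)⁻¹ i j)
      ((-((K σ)⁻¹ * K' * (K σ)⁻¹)) i j) σ := by
  rcases Nat.eq_zero_or_pos m with hm | hm
  · subst hm; exact absurd i.2 (by omega)
  haveI : Nonempty (Fin m) := ⟨⟨0, hm⟩⟩
  have hK : HasDerivAt K K' σ := matrix_hasDerivAt hd
  set u := hU.unit with hu
  have huσ : (u : Matrix (Fin m) (Fin m) ℂ) = K σ := hU.unit_spec
  have hinv : HasFDerivAt Ring.inverse
      (-ContinuousLinearMap.mulLeftRight ℂ _ ↑u⁻¹ ↑u⁻¹) (K σ) := by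
    rw [← huσ]; exact hasFDerivAt_ringInverse u
  have hcomp := hinv.comp_hasDerivAt σ hK
  have hval : (-ContinuousLinearMap.mulLeftRight ℂ
      (Matrix (Fin m) (Fin m) ℂ) ↑u⁻¹ ↑u⁻¹) K' = -((K σ)⁻¹ * K' * (K σ)⁻¹) := by
    have : ((u⁻¹ : (Matrix (Fin m) (Fin m) ℂ)ˣ) : Matrix (Fin m) (Fin m) ℂ)
        = (K σ)⁻¹ := by rw [Matrix.coe_units_inv, huσ]
    simp [this]
  have : HasDerivAt (fun s => Ring.inverse (K s))
      (-((K σ)⁻¹ * K' * (K σ)⁻¹)) σ := hval ▸ hcomp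
  have heq : (fun s => Ring.inverse (K s)) = fun s => (K s)⁻¹ := by
    funext s; exact (Matrix.nonsing_inv_eq_ringInverse (K s)).symm
  rw [heq] at this
  exact entry_hasDerivAt this i j

end Aux

lemma dot_hasDerivAt {m p : ℕ} (C : Fin m → ℂ) (B : Fin p → ℂ)
    (M : ℂ → Matrix (Fin m) (Fin p) ℂ) (M' : Matrix (Fin m) (Fin p) ℂ) (σ : ℂ)
    (h : ∀ i j, HasDerivAt (fun s => M s i j) (M' i j) σ) :
    HasDerivAt (fun s => C ⬝ᵥ (M s *ᵥ B)) (C ⬝ᵥ (M' *ᵥ B)) σ := by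
  simp only [dotProduct, mulVec]
  exact HasDerivAt.fun_sum fun i _ =>
    ((HasDerivAt.fun_sum fun j _ => (h i j).mul_const (B j)).const_mul (C i))

/-- Theorem 3.2, condition (3.12a): Hermite interpolation of the linear
transfer function at σ. -/
theorem linear_transfer_function_hermite_interpolation
    (n r : ℕ) (hn : 0 < n) (hr : 0 < r)
    (K : ℂ → Matrix (Fin n) (Fin n) ℂ) (B C : Fin n → ℂ)
    (V W : Matrix (Fin n) (Fin r) ℂ) (σ : ℂ)
    (hdiff : ∀ᶠ s in nhds σ, ∀ i j : Fin n, DifferentiableAt ℂ (fun t => K t i j) s)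
    (hK : IsUnit (K σ)) (hKhat : IsUnit (Wᵀ * K σ * V))
    (hV : ∃ z : Fin r → ℂ, (K σ)⁻¹ *ᵥ B = V *ᵥ z)
    (hW : ∃ z : Fin r → ℂ, ((K σ)ᵀ)⁻¹ *ᵥ C = W *ᵥ z) :
    deriv (fun s => C ⬝ᵥ ((K s)⁻¹ *ᵥ B)) σ =
      deriv (fun s => (C ᵥ* V) ⬝ᵥ ((Wᵀ * K s * V)⁻¹ *ᵥ (Wᵀ *ᵥ B))) σ := by
  obtain ⟨z, hz⟩ := hV
  obtain ⟨w, hw⟩ := hW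
  have hdet : IsUnit (K σ).det := (K σ).isUnit_iff_isUnit_det.mp hK
  have hdethat : IsUnit (Wᵀ * K σ * V).det :=
    (Wᵀ * K σ * V).isUnit_iff_isUnit_det.mp hKhat
  set K' : Matrix (Fin n) (Fin n) ℂ := fun i j => deriv (fun t => K t i j) σ with hK'def
  have hd : ∀ i j, HasDerivAt (fun t => K t i j) (K' i j) σ :=
    fun i j => ((hdiff.self_of_nhds) i j).hasDerivAt
  have hdh : ∀ i j : Fin r, HasDerivAt (fun t => (Wᵀ * K t * V) i j)
      ((Wᵀ * K' * V) i j) σ := by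
    intro i j
    simp only [Matrix.mul_apply]
    exact HasDerivAt.fun_sum fun b _ =>
      (HasDerivAt.fun_sum fun a _ => (hd a b).const_mul (Wᵀ i a)).mul_const (V b j)
  have h1 := dot_hasDerivAt C B (fun s => (K s)⁻¹)
    (-((K σ)⁻¹ * K' * (K σ)⁻¹)) σ (fun i j => inv_entry_hasDerivAt K K' σ hd hK i j)
  have h2 := dot_hasDerivAt (C ᵥ* V) (Wᵀ *ᵥ B) (fun s => (Wᵀ * K s * V)⁻¹)
    (-((Wᵀ * K σ * V)⁻¹ * (Wᵀ * K' * V) * (Wᵀ * K σ * V)⁻¹)) σ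
    (fun i j => inv_entry_hasDerivAt (fun s => Wᵀ * K s * V) (Wᵀ * K' * V) σ hdh hKhat i j)
  rw [h1.deriv, h2.deriv]
  -- algebraic identities
  have hB : (K σ) *ᵥ (V *ᵥ z) = B := by
    rw [← hz, Matrix.mulVec_mulVec, Matrix.mul_nonsing_inv _ hdet, Matrix.one_mulVec]
  have key1 : (Wᵀ * K σ * V)⁻¹ * Wᵀ * K σ * V = 1 := by
    simpa [Matrix.mul_assoc] using Matrix.nonsing_inv_mul _ hdethat
  have key2 : Wᵀ * K σ * V * (Wᵀ * K σ * V)⁻¹ = 1 := Matrix.mul_nonsing_inv _ hdethat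
  have hBhat : (Wᵀ * K σ * V)⁻¹ *ᵥ (Wᵀ *ᵥ B) = z := by
    rw [← hB]
    simp only [Matrix.mulVec_mulVec, ← Matrix.mul_assoc]
    rw [key1, Matrix.one_mulVec]
  have hCrow : C ᵥ* (K σ)⁻¹ = w ᵥ* Wᵀ := by
    rw [← Matrix.mulVec_transpose, Matrix.transpose_nonsing_inv, hw,
      ← Matrix.vecMul_transpose]
  have hC : C = w ᵥ* (Wᵀ * K σ) := by
    have := congrArg (fun v => v ᵥ* K σ) hCrow
    simpa [Matrix.vecMul_vecMul, Matrix.nonsing_inv_mul _ hdet, Matrix.vecMul_one]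
      using this
  have hChat : (C ᵥ* V) ᵥ* (Wᵀ * K σ * V)⁻¹ = w := by
    rw [hC]
    simp only [Matrix.vecMul_vecMul, ← Matrix.mul_assoc]
    rw [key2, Matrix.vecMul_one]
  have lhs : C ⬝ᵥ ((-((K σ)⁻¹ * K' * (K σ)⁻¹)) *ᵥ B) =
      -((w ᵥ* (Wᵀ * K' * V)) ⬝ᵥ z) := by
    rw [Matrix.neg_mulVec, dotProduct_neg, neg_inj, ← hB]
    simp only [Matrix.mulVec_mulVec, ← Matrix.mul_assoc]
    rw [show (K σ)⁻¹ * K' * (K σ)⁻¹ * K σ * V = (K σ)⁻¹ * K' * V from by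
      rw [Matrix.mul_assoc ((K σ)⁻¹ * K') ((K σ)⁻¹) (K σ),
        Matrix.nonsing_inv_mul _ hdet, Matrix.mul_one]]
    rw [Matrix.dotProduct_mulVec]
    congr 1
    rw [← Matrix.vecMul_vecMul, ← Matrix.vecMul_vecMul, hCrow]
    simp only [Matrix.vecMul_vecMul, ← Matrix.mul_assoc]
  have rhs : (C ᵥ* V) ⬝ᵥ ((-((Wᵀ * K σ * V)⁻¹ * (Wᵀ * K' * V) * (Wᵀ * K σ * V)⁻¹)) *ᵥ
      (Wᵀ *ᵥ B)) = -((w ᵥ* (Wᵀ * K' * V)) ⬝ᵥ z) := by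
    rw [Matrix.neg_mulVec, dotProduct_neg, neg_inj, ← Matrix.mulVec_mulVec,
      hBhat, Matrix.dotProduct_mulVec, ← Matrix.vecMul_vecMul, hChat]
  rw [lhs, rhs]
end

section
/- (Theorem 4.1, linear conditions.) Let (σ, p) and (μ, p) be a pair of frequency points with a parameter p ∈ P such that K(σ, p), K(μ, p), K̂(σ, p) = Wᵀ K(σ, p) V, and K̂(μ, p) = Wᵀ K(μ, p) V are all invertible. If K(σ, p)⁻¹ B(p) lies in the range of V and (K(μ, p)ᵀ)⁻¹ C(p) lies in the range of W, then the parametric linear transfer functions interpolate at both points: F_L(σ, p) = F̂_L(σ, p) and F_L(μ, p) = F̂_L(μ, p). -/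
open Matrix

/-- Theorem 4.1, linear conditions: interpolation of the parametric linear
transfer function at (σ, p) and (μ, p). -/
theorem parametric_linear_transfer_function_interpolation
    (n r : ℕ) (hn : 0 < n) (hr : 0 < r) (P : Type*)
    (K : ℂ → P → Matrix (Fin n) (Fin n) ℂ)
    (B C : P → (Fin n → ℂ))
    (V W : Matrix (Fin n) (Fin r) ℂ) (σ μ : ℂ) (p : P)
    (hKσ : IsUnit (K σ p)) (hKμ : IsUnit (K μ p))
    (hKhatσ : IsUnit (Wᵀ * K σ p * V)) (hKhatμ : IsUnit (Wᵀ * K μ p * V))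
    (hV : ∃ z : Fin r → ℂ, (K σ p)⁻¹ *ᵥ B p = V *ᵥ z)
    (hW : ∃ z : Fin r → ℂ, ((K μ p)ᵀ)⁻¹ *ᵥ C p = W *ᵥ z) :
    C p ⬝ᵥ ((K σ p)⁻¹ *ᵥ B p) =
        (C p ᵥ* V) ⬝ᵥ ((Wᵀ * K σ p * V)⁻¹ *ᵥ (Wᵀ *ᵥ B p)) ∧
      C p ⬝ᵥ ((K μ p)⁻¹ *ᵥ B p) =
        (C p ᵥ* V) ⬝ᵥ ((Wᵀ * K μ p * V)⁻¹ *ᵥ (Wᵀ *ᵥ B p)) := by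
  obtain ⟨z, hz⟩ := hV
  obtain ⟨w, hw⟩ := hW
  have hdσ := (Matrix.isUnit_iff_isUnit_det _).mp hKσ
  have hdμ := (Matrix.isUnit_iff_isUnit_det _).mp hKμ
  have hdhσ := (Matrix.isUnit_iff_isUnit_det _).mp hKhatσ
  have hdhμ := (Matrix.isUnit_iff_isUnit_det _).mp hKhatμ
  have hB : B p = K σ p *ᵥ (V *ᵥ z) := by
    have h := congrArg (fun v => K σ p *ᵥ v) hz
    simpa [Matrix.mulVec_mulVec, Matrix.mul_nonsing_inv _ hdσ] using h
  have hC : C p = (K μ p)ᵀ *ᵥ (W *ᵥ w) := by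
    have h := congrArg (fun v => (K μ p)ᵀ *ᵥ v) hw
    simpa [Matrix.mulVec_mulVec,
      Matrix.mul_nonsing_inv _ (by simpa using hdμ : IsUnit ((K μ p)ᵀ).det)] using h
  constructor
  · have h1 : Wᵀ *ᵥ B p = (Wᵀ * K σ p * V) *ᵥ z := by
      rw [hB]; simp [Matrix.mulVec_mulVec, Matrix.mul_assoc]
    rw [hz, h1, Matrix.mulVec_mulVec, Matrix.nonsing_inv_mul _ hdhσ, Matrix.one_mulVec,
      Matrix.dotProduct_mulVec]
  · have hCV : C p ᵥ* V = w ᵥ* (Wᵀ * K μ p * V) := by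
      rw [hC, Matrix.mulVec_transpose, ← Matrix.vecMul_transpose W w]
      simp [Matrix.vecMul_vecMul, Matrix.mul_assoc]
    calc C p ⬝ᵥ ((K μ p)⁻¹ *ᵥ B p)
        = ((W *ᵥ w) ᵥ* (K μ p * (K μ p)⁻¹)) ⬝ᵥ B p := by
          rw [hC, Matrix.mulVec_transpose, Matrix.dotProduct_mulVec, Matrix.vecMul_vecMul]
      _ = w ⬝ᵥ (Wᵀ *ᵥ B p) := by
          rw [Matrix.mul_nonsing_inv _ hdμ, Matrix.vecMul_one,
            ← Matrix.vecMul_transpose W w, ← Matrix.dotProduct_mulVec]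
      _ = (w ᵥ* ((Wᵀ * K μ p * V) * (Wᵀ * K μ p * V)⁻¹)) ⬝ᵥ (Wᵀ *ᵥ B p) := by
          rw [Matrix.mul_nonsing_inv _ hdhμ, Matrix.vecMul_one]
      _ = (C p ᵥ* V) ⬝ᵥ ((Wᵀ * K μ p * V)⁻¹ *ᵥ (Wᵀ *ᵥ B p)) := by
          rw [hCV, ← Matrix.vecMul_vecMul, ← Matrix.dotProduct_mulVec]
end

section
/- (Theorem 4.1, mixed polynomial condition.) Fix an integer ξ ≥ 2, frequencies σ, μ ∈ ℂ, and a parameter p ∈ P such that K(σ, p), K(μ, p), K̂(σ, p) = Wᵀ K(σ, p) V, and K̂(μ, p) = Wᵀ K(μ, p) V are all invertible. Assume K(σ, p)⁻¹ B(p) lies in the range of V and (K(μ, p)ᵀ)⁻¹ C(p) lies in the range of W. Then the parametric degree-ξ polynomial transfer functions satisfy the mixed interpolation condition F_H^{(ξ)}(σ, …, σ, μ, p) = F̂_H^{(ξ)}(σ, …, σ, μ, p), i.e. C(p) K(μ, p)⁻¹ H_ξ(p) ((K(σ, p)⁻¹ B(p))^{⊗ξ}) = Ĉ(p) K̂(μ,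 p)⁻¹ Ĥ_ξ(p) ((K̂(σ, p)⁻¹ B̂(p))^{⊗ξ}). -/
open Matrix

/-- Theorem 4.1, mixed polynomial condition: mixed interpolation of the
parametric degree-ξ polynomial transfer function at (σ, …, σ, μ, p). -/
theorem parametric_polynomial_transfer_function_mixed_interpolation
    (n r ξ : ℕ) (hn : 0 < n) (hr : 0 < r) (hξ : 2 ≤ ξ) (P : Type*)
    (K : ℂ → P → Matrix (Fin n) (Fin n) ℂ)
    (B C : P → (Fin n → ℂ))
    (Hξ : P → Matrix (Fin n) (Fin ξ → Fin n) ℂ)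
    (V W : Matrix (Fin n) (Fin r) ℂ) (σ μ : ℂ) (p : P)
    (hKσ : IsUnit (K σ p)) (hKμ : IsUnit (K μ p))
    (hKhatσ : IsUnit (Wᵀ * K σ p * V)) (hKhatμ : IsUnit (Wᵀ * K μ p * V))
    (hV : ∃ z : Fin r → ℂ, (K σ p)⁻¹ *ᵥ B p = V *ᵥ z)
    (hW : ∃ z : Fin r → ℂ, ((K μ p)ᵀ)⁻¹ *ᵥ C p = W *ᵥ z) :
    C p ⬝ᵥ ((K μ p)⁻¹ *ᵥ (Hξ p *ᵥ fun j : Fin ξ → Fin n =>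
        ∏ k, ((K σ p)⁻¹ *ᵥ B p) (j k))) =
      (C p ᵥ* V) ⬝ᵥ ((Wᵀ * K μ p * V)⁻¹ *ᵥ
        ((Wᵀ * Hξ p *
            Matrix.of (fun (j : Fin ξ → Fin n) (j' : Fin ξ → Fin r) =>
              ∏ k, V (j k) (j' k))) *ᵥ
          fun j : Fin ξ → Fin r =>
            ∏ k, ((Wᵀ * K σ p * V)⁻¹ *ᵥ (Wᵀ *ᵥ B p)) (j k))) := by
  obtain ⟨z, hz⟩ := hV
  obtain ⟨w, hw⟩ := hW
  have hKμ' : (K μ p) * (K μ p)⁻¹ = 1 :=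
    Matrix.mul_nonsing_inv _ ((Matrix.isUnit_iff_isUnit_det _).mp hKμ)
  have hKμ'' : (K μ p)⁻¹ * (K μ p) = 1 :=
    Matrix.nonsing_inv_mul _ ((Matrix.isUnit_iff_isUnit_det _).mp hKμ)
  have hKhσ' : (Wᵀ * K σ p * V)⁻¹ * (Wᵀ * K σ p * V) = 1 :=
    Matrix.nonsing_inv_mul _ ((Matrix.isUnit_iff_isUnit_det _).mp hKhatσ)
  have hKhμ' : (Wᵀ * K μ p * V) * (Wᵀ * K μ p * V)⁻¹ = 1 :=
    Matrix.mul_nonsing_inv _ ((Matrix.isUnit_iff_isUnit_det _).mp hKhatμ)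
  -- B side: the reduced solution equals z
  have hB : Wᵀ *ᵥ B p = (Wᵀ * K σ p * V) *ᵥ z := by
    have : B p = K σ p *ᵥ (V *ᵥ z) := by
      rw [← hz, Matrix.mulVec_mulVec, Matrix.mul_nonsing_inv _
        ((Matrix.isUnit_iff_isUnit_det _).mp hKσ), Matrix.one_mulVec]
    rw [this]
    simp [Matrix.mulVec_mulVec, Matrix.mul_assoc]
  have hzhat : (Wᵀ * K σ p * V)⁻¹ *ᵥ (Wᵀ *ᵥ B p) = z := by
    rw [hB, Matrix.mulVec_mulVec, hKhσ', Matrix.one_mulVec]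
  -- C side
  have hC : C p = (K μ p)ᵀ *ᵥ (W *ᵥ w) := by
    rw [← hw, Matrix.mulVec_mulVec, ← Matrix.transpose_nonsing_inv,
      ← Matrix.transpose_mul, hKμ'', Matrix.transpose_one, Matrix.one_mulVec]
  -- Kronecker identity
  have hKron : (fun j : Fin ξ → Fin n => ∏ k, (V *ᵥ z) (j k)) =
      (Matrix.of (fun (j : Fin ξ → Fin n) (j' : Fin ξ → Fin r) =>
        ∏ k, V (j k) (j' k))) *ᵥ (fun j' : Fin ξ → Fin r => ∏ k, z (j' k)) := by
    funext j
    simp only [Matrix.mulVec, dotProduct, Matrix.of_apply]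
    rw [Fintype.prod_sum fun k i => V (j k) i * z i]
    exact Finset.sum_congr rfl fun x _ => by rw [Finset.prod_mul_distrib]
  simp only [hz, hzhat]
  rw [hKron, hC]
  -- left side reduction
  have lhsEq : ∀ y : Fin n → ℂ,
      ((K μ p)ᵀ *ᵥ (W *ᵥ w)) ⬝ᵥ ((K μ p)⁻¹ *ᵥ y) = w ⬝ᵥ (Wᵀ *ᵥ y) := by
    intro y
    rw [Matrix.dotProduct_mulVec, Matrix.mulVec_transpose, Matrix.vecMul_vecMul,
      hKμ', Matrix.vecMul_one, dotProduct_comm, Matrix.dotProduct_mulVec,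
      ← Matrix.mulVec_transpose, dotProduct_comm]
  rw [lhsEq]
  -- reduced output vector
  have hCV : ((K μ p)ᵀ *ᵥ (W *ᵥ w)) ᵥ* V = w ᵥ* (Wᵀ * K μ p * V) := by
    rw [Matrix.mulVec_mulVec,
      show ((K μ p)ᵀ * W) = (Wᵀ * K μ p)ᵀ by
        rw [Matrix.transpose_mul, Matrix.transpose_transpose],
      Matrix.mulVec_transpose, Matrix.vecMul_vecMul, Matrix.mul_assoc]
  rw [hCV]
  conv_rhs => rw [Matrix.dotProduct_mulVec, Matrix.vecMul_vecMul, hKhμ',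
    Matrix.vecMul_one, ← Matrix.mulVec_mulVec, ← Matrix.mulVec_mulVec]
end

section
/- (Lemma C.1, condition (C.2g): tangential interpolation of the MIMO polynomial transfer function.) Fix an integer ξ ≥ 2, σ ∈ ℂ, and a right tangential direction b : Fin m → ℂ. Suppose K(σ) and K̂(σ) = Wᵀ K(σ) V are invertible, the vector K(σ)⁻¹ B b lies in the range of V, and the vector K(σ)⁻¹ H_ξ ((K(σ)⁻¹ B b)^{⊗ξ}) lies in the range of V. Then F_H^{(ξ)}(σ, …, σ) applied to the ξ-fold Kronecker power of b equals its reduced counterpart: C K(σ)⁻¹ H_ξ ((K(σ)⁻¹ B b)^{⊗ξ}) = Ĉ K̂(σ)⁻¹ Ĥ_ξ ((K̂(σ)⁻¹ B̂ b)^{⊗ξ}) as vectors in ℂ^q (this is the condition F_H^{(ξ)}(σ, …, σ) b^{⊗ξ} = F̂_H^{(ξ)}(σ, …, σ) b^{⊗ξ}, since the Kronecker power of the matrix product factors as the product of Kronecker powers). -/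
open Matrix

/-- Lemma C.1, condition (C.2g): tangential interpolation of the MIMO
degree-ξ polynomial transfer function at (σ, …, σ) along b^{⊗ξ}. -/
theorem mimo_polynomial_transfer_function_tangential_interpolation
    (n r m q ξ : ℕ) (hn : 0 < n) (hr : 0 < r) (hm : 0 < m) (hq : 0 < q)
    (hξ : 2 ≤ ξ)
    (K : ℂ → Matrix (Fin n) (Fin n) ℂ)
    (B : Matrix (Fin n) (Fin m) ℂ) (C : Matrix (Fin q) (Fin n) ℂ)
    (Hξ : Matrix (Fin n) (Fin ξ → Fin n) ℂ)
    (V W : Matrix (Fin n) (Fin r) ℂ) (σ : ℂ) (b : Fin m → ℂ)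
    (hK : IsUnit (K σ)) (hKhat : IsUnit (Wᵀ * K σ * V))
    (hV1 : ∃ z : Fin r → ℂ, (K σ)⁻¹ *ᵥ (B *ᵥ b) = V *ᵥ z)
    (hV2 : ∃ z : Fin r → ℂ,
      (K σ)⁻¹ *ᵥ (Hξ *ᵥ fun j : Fin ξ → Fin n =>
        ∏ k, ((K σ)⁻¹ *ᵥ (B *ᵥ b)) (j k)) = V *ᵥ z) :
    C *ᵥ ((K σ)⁻¹ *ᵥ (Hξ *ᵥ fun j : Fin ξ → Fin n =>
        ∏ k, ((K σ)⁻¹ *ᵥ (B *ᵥ b)) (j k))) =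
      (C * V) *ᵥ ((Wᵀ * K σ * V)⁻¹ *ᵥ
        ((Wᵀ * Hξ *
            Matrix.of (fun (j : Fin ξ → Fin n) (j' : Fin ξ → Fin r) =>
              ∏ k, V (j k) (j' k))) *ᵥ
          fun j : Fin ξ → Fin r =>
            ∏ k, ((Wᵀ * K σ * V)⁻¹ *ᵥ ((Wᵀ * B) *ᵥ b)) (j k))) := by
  obtain ⟨z₁, h1⟩ := hV1
  obtain ⟨z₂, h2⟩ := hV2
  have hKd : IsUnit (K σ).det := (isUnit_iff_isUnit_det _).mp hK
  have hKhd : IsUnit (Wᵀ * K σ * V).det := (isUnit_iff_isUnit_det _).mp hKhat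
  have hcancel : ∀ w : Fin n → ℂ, K σ *ᵥ ((K σ)⁻¹ *ᵥ w) = w := by
    intro w
    rw [mulVec_mulVec, mul_nonsing_inv _ hKd, one_mulVec]
  have hcancel' : ∀ w : Fin r → ℂ,
      (Wᵀ * K σ * V)⁻¹ *ᵥ ((Wᵀ * K σ * V) *ᵥ w) = w := by
    intro w
    rw [mulVec_mulVec, nonsing_inv_mul _ hKhd, one_mulVec]
  -- general cancellation principle for vectors in the range of V
  have key : ∀ (v : Fin n → ℂ) (z : Fin r → ℂ), (K σ)⁻¹ *ᵥ v = V *ᵥ z →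
      (Wᵀ * K σ * V)⁻¹ *ᵥ (Wᵀ *ᵥ v) = z := by
    intro v z h
    have hv : Wᵀ *ᵥ v = (Wᵀ * K σ * V) *ᵥ z := by
      conv_lhs => rw [← hcancel v, h]
      simp [mulVec_mulVec, Matrix.mul_assoc]
    rw [hv, hcancel']
  -- Step A : reduced input direction equals z₁
  have hA : (Wᵀ * K σ * V)⁻¹ *ᵥ ((Wᵀ * B) *ᵥ b) = z₁ := by
    rw [← mulVec_mulVec]
    exact key _ _ h1
  -- Kronecker power of V *ᵥ z₁
  have hkron : (fun j : Fin ξ → Fin n => ∏ k, (V *ᵥ z₁) (j k)) =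
      (Matrix.of (fun (j : Fin ξ → Fin n) (j' : Fin ξ → Fin r) =>
        ∏ k, V (j k) (j' k))) *ᵥ (fun j' : Fin ξ → Fin r => ∏ k, z₁ (j' k)) := by
    funext j
    simp only [mulVec, dotProduct, of_apply]
    rw [Fintype.prod_sum (fun k j' => V (j k) j' * z₁ j')]
    simp [Finset.prod_mul_distrib]
  -- Step B : reduced nonlinear term
  have hB : ((Wᵀ * Hξ *
        Matrix.of (fun (j : Fin ξ → Fin n) (j' : Fin ξ → Fin r) =>
          ∏ k, V (j k) (j' k))) *ᵥ
      fun j : Fin ξ → Fin r =>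
        ∏ k, ((Wᵀ * K σ * V)⁻¹ *ᵥ ((Wᵀ * B) *ᵥ b)) (j k)) =
      Wᵀ *ᵥ (Hξ *ᵥ fun j : Fin ξ → Fin n =>
        ∏ k, ((K σ)⁻¹ *ᵥ (B *ᵥ b)) (j k)) := by
    rw [hA, ← mulVec_mulVec, ← mulVec_mulVec, ← hkron, h1]
  rw [hB, key _ _ h2, ← mulVec_mulVec, h2]
end
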